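/- Sample-size sufficiency for probabilistic scaling (appendix computation): Let ε ∈ (0,1) and δ ∈ (0,1), and let N be a natural number with N ≥ (7.67/ε)·ln(1/δ). Set r := ⌈εN/2⌉. Then N ≥ (1/ε)·( (r − 1) + ln(1/δ) + √( 2(r − 1)·ln(1/δ) ) ). -/

import Mathlib

/-! With `x = εN` and `L = ln(1/δ)`, the ceiling gives `r - 1 ≤ x/2`, so it suffices that
`√(xL) ≤ x/2 - L`. Squaring, this is `(x - 4L)² ≥ 12L²`, i.e. `x ≥ (4 + 2√3)L ≈ 7.46 L`,
which the hypothesis `x ≥ 7.67 L` provides. -/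

open Real

theorem sqrt_mul_le_half_sub {x L : ℝ} (hL : 0 ≤ L) (hx : (4 + 2 * √3) * L ≤ x) :
    √(x * L) ≤ x / 2 - L := by
  have h3 : √3 ^ 2 = 3 := sq_sqrt (by norm_num)
  have hgap : 0 ≤ 2 * √3 * L := by positivity
  have hd : 2 * √3 * L ≤ x - 4 * L := by linarith
  have hsq : x * L ≤ (x / 2 - L) ^ 2 := by nlinarith [mul_le_mul hd hd hgap (hgap.trans hd)]
  have hnonneg : 0 ≤ x / 2 - L := by linarith
  calc √(x * L) ≤ √((x / 2 - L) ^ 2) := sqrt_le_sqrt hsq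
    _ = x / 2 - L := sqrt_sq hnonneg

theorem add_add_sqrt_le {a x L : ℝ} (hL : 0 ≤ L) (hx : (4 + 2 * √3) * L ≤ x)
    (ha : a ≤ x / 2) : a + L + √(2 * a * L) ≤ x := by
  have hmono : √(2 * a * L) ≤ √(x * L) := sqrt_le_sqrt (by nlinarith)
  linarith [sqrt_mul_le_half_sub hL hx]

/-- Sample-size sufficiency for probabilistic scaling (appendix computation):
if `ε, δ ∈ (0,1)`, `N ≥ (7.67/ε)·ln(1/δ)` and `r = ⌈εN/2⌉`, then
`N ≥ (1/ε)·((r−1) + ln(1/δ) + √(2(r−1)·ln(1/δ)))`. -/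
theorem sample_size_sufficiency (ε δ : ℝ) (hε : ε ∈ Set.Ioo (0 : ℝ) 1)
    (hδ : δ ∈ Set.Ioo (0 : ℝ) 1) (N : ℕ)
    (hN : (N : ℝ) ≥ 7.67 / ε * Real.log (1 / δ))
    (r : ℕ) (hr : r = ⌈ε * (N : ℝ) / 2⌉₊) :
    (N : ℝ) ≥ (1 / ε) *
      (((r : ℝ) - 1) + Real.log (1 / δ) +
        Real.sqrt (2 * ((r : ℝ) - 1) * Real.log (1 / δ))) := by
  obtain ⟨hε0, -⟩ := hε
  have hL : 0 ≤ log (1 / δ) := log_nonneg (by rw [le_div_iff₀ hδ.1]; linarith [hδ.2])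
  have hεN : 7.67 * log (1 / δ) ≤ ε * N := by
    rwa [ge_iff_le, div_mul_eq_mul_div, div_le_iff₀ hε0, mul_comm (N : ℝ)] at hN
  have hsqrt3 : √3 < 1.835 := (sqrt_lt' (by norm_num)).2 (by norm_num)
  have hx : (4 + 2 * √3) * log (1 / δ) ≤ ε * N := by nlinarith
  have hr_le : (r : ℝ) - 1 ≤ ε * N / 2 := by
    rw [hr]
    linarith [Nat.ceil_lt_add_one (show 0 ≤ ε * N / 2 by linarith)]
  rw [ge_iff_le, one_div, inv_mul_le_iff₀ hε0]
  exact add_add_sqrt_le hL hx hr_le
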